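/- Let X be a connected graph with vertex set of cardinality k. Then every cellular 1-cycle w in X (an element of the kernel of the boundary map C₁(X) → C₀(X) of the simplicial/cellular chain complex) decomposes as a sum w = Σᵢ wᵢ of cycles supported on edge loops, each of length at most k, with |w| = Σᵢ |wᵢ|, where |·| denotes the ℓ¹-norm on C₁(X). -/
import Mathlib


open SimpleGraph Finset

/-- The cellular `1`-chain (with integer coefficients) carried by a single oriented
edge from `u` to `v`, recorded as an antisymmetric function `V → V → ℤ`. -/
def edgeChain {V : Type*} [DecidableEq V] (u v : V) : V → V → ℤ := fun x y =>
  (if x = u ∧ y = v then (1 : ℤ) else 0) - (if x = v ∧ y = u then (1 : ℤ) else 0)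

/-- The cellular `1`-chain carried by a walk in a graph: the sum of the oriented
edge chains of its darts. -/
def walkChain {V : Type*} [DecidableEq V] {G : SimpleGraph V} {a b : V}
    (p : G.Walk a b) : V → V → ℤ :=
  (p.darts.map (fun d => edgeChain d.toProd.1 d.toProd.2)).sum

/-- Twice the ℓ¹-norm of a `1`-chain on a finite graph, summing `|c u v|` over all
ordered pairs. -/
def chainNorm {V : Type*} [Fintype V] (c : V → V → ℤ) : ℕ :=
  ∑ u : V, ∑ v : V, (c u v).natAbs

section aux
variable {V : Type*} [DecidableEq V] {G : SimpleGraph V}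

lemma walkChain_cons {a b c : V} (h : G.Adj a b) (p : G.Walk b c) :
    walkChain (Walk.cons h p) = edgeChain a b + walkChain p := by
  simp [walkChain, Walk.darts_cons]

lemma walkChain_copy {a b a' b' : V} (p : G.Walk a b) (ha : a = a') (hb : b = b') :
    walkChain (p.copy ha hb) = walkChain p := by simp [walkChain]

lemma edgeChain_anti (a b u v : V) : edgeChain a b v u = - edgeChain a b u v := by
  simp only [edgeChain]
  by_cases h1 : u = a ∧ v = b <;> by_cases h2 : u = b ∧ v = a <;>
    simp [h1, h2, and_comm]

lemma edgeChain_sum [Fintype V] (a b v : V) :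
    ∑ u : V, edgeChain a b u v =
      (if v = b then (1:ℤ) else 0) - (if v = a then (1:ℤ) else 0) := by
  simp only [edgeChain, Finset.sum_sub_distrib, ite_and]
  simp [Finset.sum_ite_eq]

lemma exists_good_loop [Fintype V] (G : SimpleGraph V) (k : ℕ)
    (hk : Fintype.card V = k)
    (c : V → V → ℤ) (hanti : ∀ u v, c u v = - c v u)
    (hsupp : ∀ u v, c u v ≠ 0 → G.Adj u v)
    (hcycle : ∀ v, ∑ u, c u v = 0)
    (hpos : ∃ a b, 0 < c a b) :
    ∃ (x : V) (p : G.Walk x x) (w : V → V → ℤ),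
      p.length ≤ k ∧ w = walkChain p ∧
      (∀ u v, w v u = - w u v) ∧
      (∀ v, ∑ u, w u v = 0) ∧
      (∀ u v, w u v = 0 ∨ (w u v = 1 ∧ 0 < c u v) ∨ (w u v = -1 ∧ c u v < 0)) ∧
      (∃ u v, w u v ≠ 0) := by
  classical
  obtain ⟨a0, b0, ha0⟩ := hpos
  set P : V → Prop := fun v => ∃ u, 0 < c v u with hP
  have hf' : ∀ v, P v → ∃ u, 0 < c v u := fun v h => h
  set f : V → V := fun v => if h : P v then h.choose else v with hfdef
  have hf : ∀ v, P v → 0 < c v (f v) := by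
    intro v hv
    simp only [hfdef, dif_pos hv]
    exact hv.choose_spec
  have hcol : ∀ v, ∑ u, c v u = 0 := by
    intro v
    have h1 : ∑ u, c v u = -∑ u, c u v := by
      rw [← Finset.sum_neg_distrib]
      exact Finset.sum_congr rfl fun u _ => hanti v u
    rw [h1, hcycle v, neg_zero]
  have hstep : ∀ v, P v → P (f v) := by
    intro v hv
    by_contra hnc
    have hle : ∀ u, c (f v) u ≤ 0 := by
      intro u
      by_contra h
      exact hnc ⟨u, lt_of_not_ge h⟩
    have h0 : ∀ u ∈ Finset.univ, c (f v) u = 0 :=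
      (Finset.sum_eq_zero_iff_of_nonpos (fun u _ => hle u)).mp (hcol (f v))
    have h1 := h0 v (Finset.mem_univ v)
    have h2 := hf v hv
    have h3 := hanti (f v) v
    linarith
  have hPiter : ∀ n, P (f^[n] a0) := by
    intro n
    induction n with
    | zero => exact ⟨b0, ha0⟩
    | succ n ih => rw [Function.iterate_succ_apply']; exact hstep _ ih
  -- pigeonhole
  have hcard : Fintype.card V < Fintype.card (Fin (k+1)) := by simp [hk]
  obtain ⟨n, n', hne, heq⟩ :=
    Fintype.exists_ne_map_eq_of_card_lt (fun n : Fin (k+1) => f^[n.1] a0) hcard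
  have hQ : ∃ j, ∃ i, i < j ∧ f^[i] a0 = f^[j] a0 := by
    rcases hne.lt_or_gt with h | h
    · exact ⟨n', n, h, heq⟩
    · exact ⟨n, n', h, heq.symm⟩
  have hQk : ∀ j, (∃ i, i < j ∧ f^[i] a0 = f^[j] a0) → True := fun _ _ => trivial
  set j := Nat.find hQ with hjdef
  obtain ⟨i, hij, hfix⟩ := Nat.find_spec hQ
  have hjk : j ≤ k := by
    rcases hne.lt_or_gt with h | h
    · exact le_trans (Nat.find_le ⟨n, h, heq⟩) (Nat.lt_succ_iff.mp n'.isLt)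
    · exact le_trans (Nat.find_le ⟨n', h, heq.symm⟩) (Nat.lt_succ_iff.mp n.isLt)
  have hmin : ∀ m < j, ¬ ∃ i, i < m ∧ f^[i] a0 = f^[m] a0 := fun m hm => Nat.find_min hQ hm
  set L := j - i with hLdef
  have hL1 : 1 ≤ L := Nat.sub_pos_of_lt hij
  have hLk : L ≤ k := le_trans (Nat.sub_le _ _) hjk
  set b : ℕ → V := fun n => f^[i + n] a0 with hbdef
  have binj : ∀ s t, s < L → t < L → b s = b t → s = t := by
    intro s t hs ht hbe
    by_contra hst
    rcases Nat.lt_or_ge s t with h | h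
    · exact hmin (i + t) (by omega) ⟨i + s, by omega, hbe⟩
    · have h' : t < s := by omega
      exact hmin (i + s) (by omega) ⟨i + t, by omega, hbe.symm⟩
  have bP : ∀ n, P (b n) := fun n => hPiter (i + n)
  have bstep : ∀ n, b (n + 1) = f (b n) := by
    intro n
    simp only [hbdef]
    rw [show i + (n+1) = (i+n) + 1 by ring, Function.iterate_succ_apply']
  have bpos : ∀ n, 0 < c (b n) (b (n + 1)) := by
    intro n; rw [bstep]; exact hf _ (bP n)
  have bloop : b L = b 0 := by
    simp only [hbdef, add_zero]
    rw [show i + L = j by omega]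
    exact hfix.symm
  -- build the walk
  have hwalk : ∀ (n : ℕ) (x : V), P x →
      ∃ p : G.Walk x (f^[n] x), p.length = n ∧
        walkChain p = ∑ m ∈ Finset.range n, edgeChain (f^[m] x) (f^[m+1] x) := by
    intro n
    induction n with
    | zero => intro x hx; exact ⟨Walk.nil, rfl, by simp [walkChain]⟩
    | succ n ih =>
      intro x hx
      obtain ⟨q, hql, hqc⟩ := ih (f x) (hstep x hx)
      have hadj : G.Adj x (f x) := hsupp _ _ (ne_of_gt (hf x hx))
      refine ⟨(Walk.cons hadj q).copy rfl (Function.iterate_succ_apply f n x).symm, ?_, ?_⟩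
      · simp [hql]
      · rw [walkChain_copy, walkChain_cons, hqc, Finset.sum_range_succ']
        simp only [← Function.iterate_succ_apply f, Nat.succ_eq_add_one,
          Function.iterate_zero_apply, Function.iterate_one]
        exact add_comm _ _
  obtain ⟨p0, hp0l, hp0c⟩ := hwalk L (b 0) (bP 0)
  have hend : f^[L] (b 0) = b 0 := by
    simp only [hbdef, add_zero, ← Function.iterate_add_apply]
    rw [show L + i = j by omega]
    exact hfix.symm
  have hbm : ∀ m, f^[m] (b 0) = b m := by
    intro m
    simp only [hbdef, add_zero]
    rw [← Function.iterate_add_apply, add_comm]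
  have hWc : walkChain (p0.copy rfl hend) =
      ∑ m ∈ Finset.range L, edgeChain (b m) (b (m+1)) := by
    rw [walkChain_copy, hp0c]
    exact Finset.sum_congr rfl fun m _ => by rw [hbm m, hbm (m+1)]
  have hval : ∀ u v, walkChain (p0.copy rfl hend) u v =
      (∑ m ∈ Finset.range L, (if u = b m ∧ v = b (m+1) then (1:ℤ) else 0)) -
      (∑ m ∈ Finset.range L, (if u = b (m+1) ∧ v = b m then (1:ℤ) else 0)) := by
    intro u v
    rw [hWc]
    simp only [Finset.sum_apply]
    rw [← Finset.sum_sub_distrib]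
    rfl
  have hS1 : ∀ u v, (∑ m ∈ Finset.range L, (if u = b m ∧ v = b (m+1) then (1:ℤ) else 0)) = 0 ∨
      ((∑ m ∈ Finset.range L, (if u = b m ∧ v = b (m+1) then (1:ℤ) else 0)) = 1 ∧ 0 < c u v) := by
    intro u v
    by_cases hex : ∃ m, m < L ∧ u = b m ∧ v = b (m+1)
    · obtain ⟨m, hm, h1, h2⟩ := hex
      right
      refine ⟨?_, by rw [h1, h2]; exact bpos m⟩
      rw [Finset.sum_eq_single_of_mem m (Finset.mem_range.mpr hm)]
      · rw [if_pos ⟨h1, h2⟩]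
      · intro m' hm' hne
        rw [if_neg]
        rintro ⟨h1', h2'⟩
        exact hne (binj m' m (Finset.mem_range.mp hm') hm (h1'.symm.trans h1))
    · left
      refine Finset.sum_eq_zero fun m hm => if_neg fun hc => hex ⟨m, Finset.mem_range.mp hm, hc⟩
  have hS2 : ∀ u v, (∑ m ∈ Finset.range L, (if u = b (m+1) ∧ v = b m then (1:ℤ) else 0)) = 0 ∨
      ((∑ m ∈ Finset.range L, (if u = b (m+1) ∧ v = b m then (1:ℤ) else 0)) = 1 ∧ c u v < 0) := by
    intro u v
    by_cases hex : ∃ m, m < L ∧ u = b (m+1) ∧ v = b m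
    · obtain ⟨m, hm, h1, h2⟩ := hex
      right
      constructor
      · rw [Finset.sum_eq_single_of_mem m (Finset.mem_range.mpr hm)]
        · rw [if_pos ⟨h1, h2⟩]
        · intro m' hm' hne
          rw [if_neg]
          rintro ⟨h1', h2'⟩
          exact hne (binj m' m (Finset.mem_range.mp hm') hm (h2'.symm.trans h2))
      · rw [h1, h2]
        have h3 := bpos m
        have h4 := hanti (b (m+1)) (b m)
        linarith
    · left
      refine Finset.sum_eq_zero fun m hm => if_neg fun hc => hex ⟨m, Finset.mem_range.mp hm, hc⟩
  refine ⟨b 0, p0.copy rfl hend, walkChain (p0.copy rfl hend), ?_, rfl, ?_, ?_, ?_, ?_⟩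
  · simp [hp0l, hLk]
  · -- antisymmetry
    intro u v
    rw [hWc]
    simp only [Finset.sum_apply]
    rw [← Finset.sum_neg_distrib]
    exact Finset.sum_congr rfl fun m _ => edgeChain_anti _ _ _ _
  · -- zero boundary
    intro v
    have h1 : ∀ u, walkChain (p0.copy rfl hend) u v =
        ∑ m ∈ Finset.range L, edgeChain (b m) (b (m+1)) u v := by
      intro u; rw [hWc]; simp only [Finset.sum_apply]
    calc ∑ u, walkChain (p0.copy rfl hend) u v
        = ∑ m ∈ Finset.range L, ∑ u, edgeChain (b m) (b (m+1)) u v := by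
          rw [Finset.sum_congr rfl fun u _ => h1 u]; exact Finset.sum_comm
      _ = ∑ m ∈ Finset.range L,
            ((if v = b (m+1) then (1:ℤ) else 0) - (if v = b m then (1:ℤ) else 0)) :=
          Finset.sum_congr rfl fun m _ => edgeChain_sum _ _ _
      _ = (if v = b L then (1:ℤ) else 0) - (if v = b 0 then (1:ℤ) else 0) :=
          Finset.sum_range_sub (fun n => if v = b n then (1:ℤ) else 0) L
      _ = 0 := by rw [bloop]; ring
  · -- key value property
    intro u v
    rcases hS1 u v with h1 | ⟨h1, hc1⟩ <;> rcases hS2 u v with h2 | ⟨h2, hc2⟩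
    · left; rw [hval, h1, h2]; ring
    · right; right; exact ⟨by rw [hval, h1, h2]; ring, hc2⟩
    · right; left; exact ⟨by rw [hval, h1, h2]; ring, hc1⟩
    · exact absurd hc1 (not_lt.mpr hc2.le)
  · -- a nonzero entry
    refine ⟨b 0, b 1, ?_⟩
    rw [hval]
    have h1 : (∑ m ∈ Finset.range L, (if b 0 = b m ∧ b 1 = b (m+1) then (1:ℤ) else 0)) = 1 := by
      rw [Finset.sum_eq_single_of_mem 0 (Finset.mem_range.mpr hL1)]
      · rw [if_pos ⟨rfl, rfl⟩]
      · intro m' hm' hne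
        rw [if_neg]
        rintro ⟨h1', h2'⟩
        exact hne (binj m' 0 (Finset.mem_range.mp hm') hL1 h1'.symm)
    have h2 : (∑ m ∈ Finset.range L, (if b 0 = b (m+1) ∧ b 1 = b m then (1:ℤ) else 0)) = 0 := by
      refine Finset.sum_eq_zero fun m hm => if_neg ?_
      rintro ⟨h1', h2'⟩
      have h3 := bpos m
      rw [← h1', ← h2'] at h3
      have h4 := bpos 0
      have h5 := hanti (b 0) (b 1)
      linarith
    rw [h1, h2]
    norm_num

lemma main_aux [Fintype V] (G : SimpleGraph V) (k : ℕ)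
    (hk : Fintype.card V = k) :
    ∀ (N : ℕ) (c : V → V → ℤ), chainNorm c ≤ N →
    (∀ u v, c u v = - c v u) → (∀ u v, c u v ≠ 0 → G.Adj u v) →
    (∀ v, ∑ u, c u v = 0) →
    ∃ (m : ℕ) (w : Fin m → V → V → ℤ),
      (∀ x y, c x y = ∑ i, w i x y) ∧
      (∀ i, ∃ (x : V) (p : G.Walk x x), p.length ≤ k ∧ w i = walkChain p) ∧
      chainNorm c = ∑ i, chainNorm (w i) := by
  intro N
  induction N with
  | zero =>
    intro c hN hanti hsupp hcycle
    have h0 : ∀ u v, c u v = 0 := by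
      intro u v
      have : (c u v).natAbs = 0 := by
        have h1 : chainNorm c = 0 := Nat.le_zero.mp hN
        have h2 : ∑ v : V, (c u v).natAbs = 0 := by
          have := (Finset.sum_eq_zero_iff.mp h1) u (Finset.mem_univ u)
          exact this
        exact (Finset.sum_eq_zero_iff.mp h2) v (Finset.mem_univ v)
      omega
    refine ⟨0, fun i => i.elim0, ?_, fun i => i.elim0, ?_⟩
    · intro x y; simp [h0]
    · simp [chainNorm, h0]
  | succ N ih =>
    intro c hN hanti hsupp hcycle
    by_cases hpos : ∃ a b, 0 < c a b
    · obtain ⟨x, p, w, hplen, hwp, hwanti, hwcycle, hkey, hx, hy, hne⟩ :=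
        exists_good_loop G k hk c hanti hsupp hcycle hpos
      set c' : V → V → ℤ := fun u v => c u v - w u v with hc'def
      have hentry : ∀ u v, (c u v).natAbs = (c' u v).natAbs + (w u v).natAbs := by
        intro u v
        rcases hkey u v with h | ⟨h, hc⟩ | ⟨h, hc⟩ <;> simp only [hc'def, h] <;> omega
      have hnorm : chainNorm c = chainNorm c' + chainNorm w := by
        simp only [chainNorm, ← Finset.sum_add_distrib]
        exact Finset.sum_congr rfl fun u _ => Finset.sum_congr rfl fun v _ => hentry u v
      have hwne : 0 < chainNorm w := by
        rcases Nat.eq_zero_or_pos (chainNorm w) with h | h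
        swap
        · exact h
        · exfalso
          apply hne
          have h1 := (Finset.sum_eq_zero_iff.mp h) hx (Finset.mem_univ hx)
          have h2 := (Finset.sum_eq_zero_iff.mp h1) hy (Finset.mem_univ hy)
          omega
      have hc'N : chainNorm c' ≤ N := by omega
      have hc'anti : ∀ u v, c' u v = - c' v u := by
        intro u v
        simp only [hc'def, hwanti u v, hanti u v]
        ring
      have hc'supp : ∀ u v, c' u v ≠ 0 → G.Adj u v := by
        intro u v h
        apply hsupp u v
        rcases hkey u v with hh | ⟨hh, hc⟩ | ⟨hh, hc⟩
        · simpa [hc'def, hh] using h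
        · exact ne_of_gt hc
        · exact ne_of_lt hc
      have hc'cycle : ∀ v, ∑ u, c' u v = 0 := by
        intro v
        simp only [hc'def, Finset.sum_sub_distrib, hcycle v, hwcycle v, sub_zero]
      obtain ⟨m, ws, hsum, hloops, hnorms⟩ := ih c' hc'N hc'anti hc'supp hc'cycle
      refine ⟨m + 1, Fin.cons w ws, ?_, ?_, ?_⟩
      · intro a b
        rw [Fin.sum_univ_succ]
        simp only [Fin.cons_zero, Fin.cons_succ]
        have := hsum a b
        simp only [hc'def] at this
        omega
      · intro i
        refine Fin.cases ?_ ?_ i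
        · exact ⟨x, p, hplen, by simp [hwp]⟩
        · intro i'
          simpa using hloops i'
      · rw [Fin.sum_univ_succ]
        simp only [Fin.cons_zero, Fin.cons_succ]
        omega
    · push_neg at hpos
      have h0 : ∀ u v, c u v = 0 := by
        intro u v
        have h1 := hpos u v
        have h2 := hpos v u
        have h3 := hanti u v
        linarith
      refine ⟨0, fun i => i.elim0, ?_, fun i => i.elim0, ?_⟩
      · intro a b; simp [h0]
      · simp [chainNorm, h0]
end aux

/-- In a connected graph `X` with `k` vertices, every cellular `1`-cycle `w` decomposes
as a sum `w = Σᵢ wᵢ` of cycles carried by closed edge loops of length at most `k`,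
with no cancellation: `|w| = Σᵢ |wᵢ|`. -/
theorem cycle_decomposes_into_short_loops
    {V : Type*} [Fintype V] [DecidableEq V] (G : SimpleGraph V) (k : ℕ)
    (hk : Fintype.card V = k) (hconn : G.Connected)
    (c : V → V → ℤ)
    (hanti : ∀ u v, c u v = - c v u)
    (hsupp : ∀ u v, c u v ≠ 0 → G.Adj u v)
    (hcycle : ∀ v : V, ∑ u : V, c u v = 0) :
    ∃ (m : ℕ) (w : Fin m → V → V → ℤ),
      (∀ x y, c x y = ∑ i, w i x y) ∧
      (∀ i, ∃ (x : V) (p : G.Walk x x), p.length ≤ k ∧ w i = walkChain p) ∧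
      chainNorm c = ∑ i, chainNorm (w i) :=
  main_aux G k hk (chainNorm c) c le_rfl hanti hsupp hcycle
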